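/- arXiv:0707.2114 — 5 statements merged into one kernel-verified Lean document; each statement's English description precedes it below -/
import Mathlib

section
/- Assume that both A and its transpose A^t satisfy Cuntz–Krieger condition (I). Then for every admissible word μ of length 2 there exist τ_μ ∈ [σ_A]_c and continuous maps k, l : X_A → ℤ≥0 such that σ_A^{k(x)}(τ_μ(x)) = σ_A^{l(x)}(x) for all x ∈ X_A, and such that τ_μ(y) = σ_A(y), k(y) = 0 and l(y) = 1 for every y in the cylinder set U_μ. -/
open Matrix

/-- The one-sided topological Markov shift space `X_A` determined by a square matrix `A`
(with entries in `{0,1}`): sequences `x : ℕ → Fin N` with `A (x n) (x (n+1)) = 1` for all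
`n`, carrying the (subspace of the) product topology. -/
abbrev MarkovShift {N : ℕ} (A : Matrix (Fin N) (Fin N) ℕ) : Type :=
  { x : ℕ → Fin N // ∀ n, A (x n) (x (n + 1)) = 1 }

/-- The shift transformation `σ_A`. -/
def mshift {N : ℕ} (A : Matrix (Fin N) (Fin N) ℕ) :
    MarkovShift A → MarkovShift A :=
  fun x => ⟨fun n => x.1 (n + 1), fun n => x.2 (n + 1)⟩

/-- The orbit `orb_{σ_A}(x) = ⋃_{k≥0} ⋃_{l≥0} σ_A^{-k}(σ_A^l(x))` of `x`. -/
def orb {N : ℕ} (A : Matrix (Fin N) (Fin N) ℕ) (x : MarkovShift A) :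
    Set (MarkovShift A) :=
  { y | ∃ k l : ℕ, (mshift A)^[k] y = (mshift A)^[l] x }

/-- The full group `[σ_A]`: homeomorphisms moving every point within its orbit. -/
def fullGroup {N : ℕ} (A : Matrix (Fin N) (Fin N) ℕ) :
    Set (MarkovShift A ≃ₜ MarkovShift A) :=
  { τ | ∀ x, τ x ∈ orb A x }

/-- The topological full group `[σ_A]_c`: elements of the full group with continuous
orbit cocycles. -/
def topFullGroup {N : ℕ} (A : Matrix (Fin N) (Fin N) ℕ) :
    Set (MarkovShift A ≃ₜ MarkovShift A) :=
  { τ | τ ∈ fullGroup A ∧ ∃ k l : MarkovShift A → ℕ, Continuous k ∧ Continuous l ∧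
      ∀ x, (mshift A)^[k x] (τ x) = (mshift A)^[l x] x }

/-- Cuntz–Krieger condition (I), formulated as: the shift space has no isolated points. -/
def ConditionI {N : ℕ} (A : Matrix (Fin N) (Fin N) ℕ) : Prop :=
  ∀ x : MarkovShift A, ¬ IsOpen ({x} : Set (MarkovShift A))

/-!
For `μ₀ ≠ μ₁` take the involution that deletes the head `μ₀` on `U_{μ₀μ₁}`, prepends `μ₀` on
`U_{μ₁}` and is the identity elsewhere. For `μ₀ = μ₁ = a`, condition (I) for `Aᵀ` yields `ν ≠ a`
with `A ν a = 1` (otherwise the fixed point `aaa⋯` would be isolated in `X_{Aᵀ}`), and `τ_μ` is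
the involution exchanging the heads of `U_{aa}` and `U_{νa}` followed by the previous involution
for the word `νa`. Both involutions depend on finitely many coordinates, hence are
homeomorphisms with continuous cocycles; since `τ_μ = σ_A` on the clopen set `U_μ`, the cocycles
may then be redefined to be `0` and `1` there.
-/

open Function

section OrbitCocycle

variable {X : Type*} [TopologicalSpace X]

structure IsOrbitCocycle (T f : X → X) (k l : X → ℕ) : Prop where
  continuous_k : Continuous k
  continuous_l : Continuous l
  iterate_eq : ∀ x, T^[k x] (f x) = T^[l x] x

variable {T f g : X → X} {k l k' l' : X → ℕ}

theorem IsOrbitCocycle.comp (hf : IsOrbitCocycle T f k l) (hg : IsOrbitCocycle T g k' l')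
    (hgc : Continuous g) :
    IsOrbitCocycle T (f ∘ g) (fun x => k (g x) + k' x) (fun x => l (g x) + l' x) where
  continuous_k := (hf.continuous_k.comp hgc).add hg.continuous_k
  continuous_l := (hf.continuous_l.comp hgc).add hg.continuous_l
  iterate_eq x := by
    calc T^[k (g x) + k' x] (f (g x)) = T^[k' x] (T^[l (g x)] (g x)) := by
          rw [add_comm, iterate_add_apply, hf.iterate_eq]
      _ = T^[l (g x)] (T^[k' x] (g x)) := by
          rw [← iterate_add_apply, add_comm, iterate_add_apply]
      _ = T^[l (g x) + l' x] x := by rw [hg.iterate_eq, iterate_add_apply]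

theorem IsOrbitCocycle.piecewise (h : IsOrbitCocycle T f k l) {U : Set X}
    [DecidablePred (· ∈ U)] (hU : IsClopen U) (hfU : ∀ x ∈ U, f x = T x) :
    IsOrbitCocycle T f (U.piecewise 0 k) (U.piecewise 1 l) where
  continuous_k := continuous_const.piecewise (by simp [hU.frontier_eq]) h.continuous_k
  continuous_l := continuous_const.piecewise (by simp [hU.frontier_eq]) h.continuous_l
  iterate_eq x := by
    by_cases hx : x ∈ U
    · simp [hx, hfU x hx]
    · simp [hx, h.iterate_eq x]

end OrbitCocycle

def Function.Involutive.toHomeomorph {X : Type*} [TopologicalSpace X] {f : X → X}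
    (hf : Involutive f) (hc : Continuous f) : X ≃ₜ X :=
  ⟨hf.toPerm f, hc, hc⟩

namespace MarkovShift

variable {N : ℕ} {A : Matrix (Fin N) (Fin N) ℕ}

theorem continuous_coord (n : ℕ) : Continuous fun x : MarkovShift A => x.1 n :=
  (continuous_apply n).comp continuous_subtype_val

theorem continuous_of_forall_lt_eq {β : Type*} [TopologicalSpace β] {f : MarkovShift A → β}
    (m : ℕ) (hf : ∀ x y : MarkovShift A, (∀ i < m, x.1 i = y.1 i) → f x = f y) :
    Continuous f := by
  refine continuous_iff_continuousAt.2 fun x => (continuousAt_const (y := f x)).congr ?_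
  have hnear : ∀ᶠ y in nhds x, ∀ i < m, x.1 i = y.1 i :=
    (Filter.eventually_all_finite (Set.finite_lt_nat m)).2 fun i _ =>
      (continuous_coord i).continuousAt.eventually_mem ((isOpen_discrete {x.1 i}).mem_nhds rfl)
        |>.mono fun y hy => (Set.mem_singleton_iff.1 hy).symm
  exact hnear.mono fun y hy => hf x y hy

theorem continuous_of_forall_coord_eq {F : MarkovShift A → MarkovShift A}
    (hF : ∀ n, ∃ m, ∀ x y : MarkovShift A, (∀ i < m, x.1 i = y.1 i) → (F x).1 n = (F y).1 n) :
    Continuous F :=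
  continuous_induced_rng.2 <| continuous_pi fun n =>
    let ⟨m, hm⟩ := hF n; continuous_of_forall_lt_eq m hm

theorem isClopen_cylinder (a b : Fin N) : IsClopen {x : MarkovShift A | x.1 0 = a ∧ x.1 1 = b} :=
  ((isClopen_discrete {a}).preimage (continuous_coord 0)).inter
    ((isClopen_discrete {b}).preimage (continuous_coord 1))

def cons (a : Fin N) (x : MarkovShift A) (h : A a (x.1 0) = 1) : MarkovShift A :=
  ⟨fun n => Nat.casesOn n a x.1, fun n => Nat.casesOn n h x.2⟩

@[simp] theorem cons_zero (a : Fin N) (x : MarkovShift A) (h) : (cons a x h).1 0 = a := rfl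

@[simp] theorem mshift_cons (a : Fin N) (x : MarkovShift A) (h) : mshift A (cons a x h) = x := rfl

theorem cons_mshift {a : Fin N} {x : MarkovShift A} (hx : x.1 0 = a) (h) :
    cons a (mshift A x) h = x := by
  refine Subtype.ext <| funext fun n => ?_
  cases n
  · exact hx.symm
  · rfl


theorem mem_topFullGroup_of_isOrbitCocycle {τ : MarkovShift A ≃ₜ MarkovShift A}
    {k l : MarkovShift A → ℕ} (h : IsOrbitCocycle (mshift A) τ k l) : τ ∈ topFullGroup A :=
  ⟨fun x => ⟨k x, l x, h.iterate_eq x⟩, k, l, h.continuous_k, h.continuous_l, h.iterate_eq⟩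

variable {a b : Fin N}

def prefixToggle (hab : A a b = 1) (x : MarkovShift A) : MarkovShift A :=
  if x.1 0 = a ∧ x.1 1 = b then mshift A x
  else if h : x.1 0 = b then cons a x (h ▸ hab)
  else x

section prefixToggle

variable (hab : A a b = 1) {x : MarkovShift A}

theorem prefixToggle_of_mem_cylinder (h0 : x.1 0 = a) (h1 : x.1 1 = b) :
    prefixToggle hab x = mshift A x :=
  if_pos ⟨h0, h1⟩

theorem prefixToggle_of_head_eq (hne : a ≠ b) (hb : x.1 0 = b) :
    prefixToggle hab x = cons a x (hb ▸ hab) := by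
  rw [prefixToggle, if_neg fun h => hne (h.1.symm.trans hb), dif_pos hb]

theorem prefixToggle_of_not_mem (hx : ¬(x.1 0 = a ∧ x.1 1 = b)) (hb : x.1 0 ≠ b) :
    prefixToggle hab x = x := by
  rw [prefixToggle, if_neg hx, dif_neg hb]

end prefixToggle

theorem prefixToggle_involutive (hab : A a b = 1) (hne : a ≠ b) :
    Involutive (prefixToggle hab) := by
  intro x
  by_cases hx : x.1 0 = a ∧ x.1 1 = b
  · rw [prefixToggle_of_mem_cylinder hab hx.1 hx.2, prefixToggle_of_head_eq hab hne hx.2,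
      cons_mshift hx.1]
  · by_cases hb : x.1 0 = b
    · rw [prefixToggle_of_head_eq hab hne hb, prefixToggle_of_mem_cylinder hab rfl hb,
        mshift_cons]
    · rw [prefixToggle_of_not_mem hab hx hb, prefixToggle_of_not_mem hab hx hb]

theorem continuous_prefixToggle (hab : A a b = 1) : Continuous (prefixToggle hab) := by
  refine continuous_of_forall_coord_eq fun n => ⟨n + 2, fun x y hxy => ?_⟩
  have h0 := hxy 0 (by omega)
  have h1 := hxy 1 (by omega)
  unfold prefixToggle
  simp only [h0, h1]
  split_ifs
  · exact hxy (n + 1) (by omega)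
  · cases n
    · rfl
    · exact hxy _ (by omega)
  · exact hxy n (by omega)

theorem isOrbitCocycle_prefixToggle (hab : A a b = 1) (hne : a ≠ b) :
    IsOrbitCocycle (mshift A) (prefixToggle hab) (fun x => if x.1 0 = b then 1 else 0)
      (fun x => if x.1 0 = a ∧ x.1 1 = b then 1 else 0) where
  continuous_k := continuous_of_forall_lt_eq 1 fun x y h => by simp only [h 0 one_pos]
  continuous_l := continuous_of_forall_lt_eq 2 fun x y h => by
    simp only [h 0 (by omega), h 1 (by omega)]
  iterate_eq x := by
    by_cases hx : x.1 0 = a ∧ x.1 1 = b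
    · simp [hx, prefixToggle_of_mem_cylinder hab hx.1 hx.2, hne]
    · by_cases hb : x.1 0 = b
      · simp [hb, prefixToggle_of_head_eq hab hne hb, hne.symm]
      · simp [hx, hb, prefixToggle_of_not_mem hab hx hb]

variable {c d e : Fin N}

def headSwap (hce : A c e = 1) (hde : A d e = 1) (x : MarkovShift A) : MarkovShift A :=
  if h : x.1 0 = c ∧ x.1 1 = e then cons d (mshift A x) (h.2 ▸ hde)
  else if h : x.1 0 = d ∧ x.1 1 = e then cons c (mshift A x) (h.2 ▸ hce)
  else x

section headSwap

variable (hce : A c e = 1) (hde : A d e = 1) {x : MarkovShift A}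

theorem headSwap_of_mem_left (h : x.1 0 = c ∧ x.1 1 = e) :
    headSwap hce hde x = cons d (mshift A x) (h.2 ▸ hde) :=
  dif_pos h

theorem headSwap_of_mem_right (hne : c ≠ d) (h : x.1 0 = d ∧ x.1 1 = e) :
    headSwap hce hde x = cons c (mshift A x) (h.2 ▸ hce) := by
  rw [headSwap, dif_neg fun h' => hne (h'.1.symm.trans h.1), dif_pos h]

theorem headSwap_of_not_mem (hc : ¬(x.1 0 = c ∧ x.1 1 = e)) (hd : ¬(x.1 0 = d ∧ x.1 1 = e)) :
    headSwap hce hde x = x := by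
  rw [headSwap, dif_neg hc, dif_neg hd]

theorem mshift_headSwap (hne : c ≠ d) :
    mshift A (headSwap hce hde x) = mshift A x := by
  by_cases hc : x.1 0 = c ∧ x.1 1 = e
  · rw [headSwap_of_mem_left hce hde hc]; rfl
  · by_cases hd : x.1 0 = d ∧ x.1 1 = e
    · rw [headSwap_of_mem_right hce hde hne hd]; rfl
    · rw [headSwap_of_not_mem hce hde hc hd]

end headSwap

theorem headSwap_involutive (hce : A c e = 1) (hde : A d e = 1) (hne : c ≠ d) :
    Involutive (headSwap hce hde) := by
  intro x
  by_cases hc : x.1 0 = c ∧ x.1 1 = e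
  · rw [headSwap_of_mem_left hce hde hc]
    exact (headSwap_of_mem_right hce hde hne ⟨cons_zero _ (mshift A x) _, hc.2⟩).trans
      (cons_mshift hc.1 _)
  · by_cases hd : x.1 0 = d ∧ x.1 1 = e
    · rw [headSwap_of_mem_right hce hde hne hd]
      exact (headSwap_of_mem_left hce hde ⟨cons_zero _ (mshift A x) _, hd.2⟩).trans
        (cons_mshift hd.1 _)
    · rw [headSwap_of_not_mem hce hde hc hd, headSwap_of_not_mem hce hde hc hd]

theorem continuous_headSwap (hce : A c e = 1) (hde : A d e = 1) :
    Continuous (headSwap hce hde) := by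
  refine continuous_of_forall_coord_eq fun n => ⟨n + 2, fun x y hxy => ?_⟩
  have h0 := hxy 0 (by omega)
  have h1 := hxy 1 (by omega)
  unfold headSwap
  simp only [h0, h1]
  split_ifs
  all_goals cases n
  all_goals first | rfl | exact hxy _ (by omega)

theorem isOrbitCocycle_headSwap (hce : A c e = 1) (hde : A d e = 1) (hne : c ≠ d) :
    IsOrbitCocycle (mshift A) (headSwap hce hde) 1 1 where
  continuous_k := continuous_const
  continuous_l := continuous_const
  iterate_eq _ := mshift_headSwap hce hde hne

theorem _root_.ConditionI.exists_ne_of_diag_eq_one (hA : ConditionI A) (haa : A a a = 1) :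
    ∃ c ≠ a, A a c = 1 := by
  by_contra! hc
  let p : MarkovShift A := ⟨fun _ => a, fun _ => haa⟩
  have hcyl : {x : MarkovShift A | x.1 0 = a} = {p} := by
    refine Set.eq_singleton_iff_unique_mem.2 ⟨rfl, fun x hx => Subtype.ext <| funext fun n => ?_⟩
    induction n with
    | zero => exact hx
    | succ n ih =>
      have hn : x.1 n = a := ih
      exact not_not.1 fun hne => hc _ hne (hn ▸ x.2 n)
  exact hA p (hcyl ▸ (isOpen_discrete {a}).preimage (continuous_coord 0))

theorem exists_homeomorph_eq_mshift_on_cylinder {a b : Fin N} (hab : A a b = 1)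
    (hIt : ConditionI Aᵀ) :
    ∃ τ : MarkovShift A ≃ₜ MarkovShift A, (∃ k l, IsOrbitCocycle (mshift A) τ k l) ∧
      ∀ y : MarkovShift A, y.1 0 = a → y.1 1 = b → τ y = mshift A y := by
  obtain rfl | hne := eq_or_ne a b
  · obtain ⟨ν, hν, hνa⟩ : ∃ ν ≠ a, A ν a = 1 := hIt.exists_ne_of_diag_eq_one hab
    let R := (headSwap_involutive hab hνa hν.symm).toHomeomorph (continuous_headSwap hab hνa)
    let S := (prefixToggle_involutive hνa hν).toHomeomorph (continuous_prefixToggle hνa)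
    refine ⟨R.trans S, ⟨_, _, (isOrbitCocycle_prefixToggle hνa hν).comp
      (isOrbitCocycle_headSwap hab hνa hν.symm) R.continuous⟩, fun y h0 h1 => ?_⟩
    show prefixToggle hνa (headSwap hab hνa y) = mshift A y
    rw [headSwap_of_mem_left hab hνa ⟨h0, h1⟩]
    exact prefixToggle_of_mem_cylinder hνa (cons_zero _ (mshift A y) _) h1
  · exact ⟨(prefixToggle_involutive hab hne).toHomeomorph (continuous_prefixToggle hab),
      ⟨_, _, isOrbitCocycle_prefixToggle hab hne⟩,
      fun y h0 h1 => prefixToggle_of_mem_cylinder hab h0 h1⟩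

end MarkovShift

theorem exists_topFullGroup_elt_eq_shift_on_cylinder_general
    {N : ℕ} (A : Matrix (Fin N) (Fin N) ℕ)
    (hIt : ConditionI Aᵀ)
    (μ₀ μ₁ : Fin N) (hadm : ∃ x : MarkovShift A, x.1 0 = μ₀ ∧ x.1 1 = μ₁) :
    ∃ τ ∈ topFullGroup A, ∃ k l : MarkovShift A → ℕ,
      Continuous k ∧ Continuous l ∧
      (∀ x, (mshift A)^[k x] (τ x) = (mshift A)^[l x] x) ∧
      (∀ y : MarkovShift A, y.1 0 = μ₀ → y.1 1 = μ₁ →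
        τ y = mshift A y ∧ k y = 0 ∧ l y = 1) := by
  obtain ⟨x, rfl, rfl⟩ := hadm
  obtain ⟨τ, ⟨k, l, hkl⟩, hτ⟩ :=
    MarkovShift.exists_homeomorph_eq_mshift_on_cylinder (x.2 0) hIt
  have hU := hkl.piecewise (MarkovShift.isClopen_cylinder (x.1 0) (x.1 1)) fun y hy =>
    hτ y hy.1 hy.2
  refine ⟨τ, MarkovShift.mem_topFullGroup_of_isOrbitCocycle hU, _, _, hU.continuous_k,
    hU.continuous_l, hU.iterate_eq, fun y h0 h1 => ⟨hτ y h0 h1, ?_, ?_⟩⟩ <;> simp [h0, h1]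

/-- if `A` and `Aᵀ` satisfy condition (I), then for every admissible word
`μ = (μ₀, μ₁)` of length 2 there are `τ_μ ∈ [σ_A]_c` and continuous orbit cocycles
`k, l` with `σ_A^{k(x)}(τ_μ(x)) = σ_A^{l(x)}(x)` for all `x`, such that on the cylinder
set `U_μ` one has `τ_μ(y) = σ_A(y)`, `k(y) = 0` and `l(y) = 1`. -/
theorem exists_topFullGroup_elt_eq_shift_on_cylinder
    {N : ℕ} (hN : 2 ≤ N) (A : Matrix (Fin N) (Fin N) ℕ)
    (hA : ∀ i j, A i j = 0 ∨ A i j = 1)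
    (hI : ConditionI A) (hIt : ConditionI Aᵀ)
    (μ₀ μ₁ : Fin N) (hadm : ∃ x : MarkovShift A, x.1 0 = μ₀ ∧ x.1 1 = μ₁) :
    ∃ τ ∈ topFullGroup A, ∃ k l : MarkovShift A → ℕ,
      Continuous k ∧ Continuous l ∧
      (∀ x, (mshift A)^[k x] (τ x) = (mshift A)^[l x] x) ∧
      (∀ y : MarkovShift A, y.1 0 = μ₀ → y.1 1 = μ₁ →
        τ y = mshift A y ∧ k y = 0 ∧ l y = 1) :=
  exists_topFullGroup_elt_eq_shift_on_cylinder_general A hIt μ₀ μ₁ hadm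
end

section
/- For every x = (x_n)_{n∈ℕ} ∈ X_A and every j ∈ {1,…,N} such that jx = (j, x_1, x_2, …) ∈ X_A, there exists τ ∈ [σ_A]_c with τ(x) = jx. -/
/-!
If `x` is the constant sequence `j`, then `j x = x` and the identity works. Otherwise pick `m`
with `x m ≠ j`. The cylinder `U` of `x` of length `m + 1` and its translate `j U` are disjoint
clopen sets: a point `y` of both is constant up to `m` with `y 0 = j`, forcing `x m = j`. The
involution that prepends `j` on `U`, shifts on `j U` and fixes every other point is a
homeomorphism whose orbit cocycles are the indicator functions of `U` and `j U`, so it lies in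
`[σ_A]_c`, and it sends `x` to `j x`.
-/

open Matrix

/-- The point `jx = (j, x₁, x₂, …) ∈ X_A`, defined when `A(j, x₁) = 1`. -/
def mcons {N : ℕ} (A : Matrix (Fin N) (Fin N) ℕ) (j : Fin N) (x : MarkovShift A)
    (h : A j (x.1 0) = 1) : MarkovShift A :=
  ⟨fun n => Nat.casesOn n j fun m => x.1 m, by
    intro n
    cases n with
    | zero => exact h
    | succ m => exact x.2 m⟩

theorem IsClopen.continuous_ite {X Y : Type*} [TopologicalSpace X] [TopologicalSpace Y]
    {s : Set X} [DecidablePred (· ∈ s)] (hs : IsClopen s) {f g : X → Y}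
    (hf : Continuous f) (hg : Continuous g) : Continuous fun x => if x ∈ s then f x else g x :=
  hf.if (by simp [hs.frontier_eq]) hg

variable {N : ℕ} {A : Matrix (Fin N) (Fin N) ℕ}

theorem continuous_markovShift_apply (n : ℕ) : Continuous fun y : MarkovShift A => y.1 n :=
  (continuous_apply n).comp continuous_subtype_val

theorem isClopen_setOf_markovShift_apply_eq (n : ℕ) (i : Fin N) :
    IsClopen {y : MarkovShift A | y.1 n = i} :=
  (isClopen_discrete {i}).preimage (continuous_markovShift_apply n)

theorem continuous_mshift : Continuous (mshift A) :=
  (continuous_pi fun n => continuous_markovShift_apply (n + 1)).subtype_mk _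

@[simp]
theorem mshift_mcons (j : Fin N) (y : MarkovShift A) (h : A j (y.1 0) = 1) :
    mshift A (mcons A j y h) = y :=
  rfl

theorem mcons_mshift {j : Fin N} {y : MarkovShift A} (hy : y.1 0 = j)
    (h : A j ((mshift A y).1 0) = 1) : mcons A j (mshift A y) h = y := by
  refine Subtype.ext (funext fun n => ?_)
  cases n with
  | zero => exact hy.symm
  | succ n => rfl

theorem mem_topFullGroup_of_iterate_eq (τ : MarkovShift A ≃ₜ MarkovShift A)
    {k l : MarkovShift A → ℕ} (hk : Continuous k) (hl : Continuous l)
    (h : ∀ x, (mshift A)^[k x] (τ x) = (mshift A)^[l x] x) : τ ∈ topFullGroup A :=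
  ⟨fun x => ⟨k x, l x, h x⟩, k, l, hk, hl, h⟩

def cylinder (x : MarkovShift A) (m : ℕ) : Set (MarkovShift A) :=
  {y | ∀ i ≤ m, y.1 i = x.1 i}

theorem isClopen_cylinder (x : MarkovShift A) (m : ℕ) : IsClopen (cylinder x m) := by
  have : cylinder x m = ⋂ i ∈ Finset.Iic m, {y : MarkovShift A | y.1 i = x.1 i} := by
    ext y
    simp [cylinder]
  rw [this]
  exact isClopen_biInter_finset fun i _ => isClopen_setOf_markovShift_apply_eq i (x.1 i)

theorem apply_eq_apply_zero_of_mem_cylinder_of_mshift_mem {x y : MarkovShift A} {m : ℕ}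
    (hy : y ∈ cylinder x m) (hσy : mshift A y ∈ cylinder x m) : ∀ i ≤ m, y.1 i = y.1 0 := by
  intro i hi
  induction i with
  | zero => rfl
  | succ i ih => exact (hσy i (by omega)).trans ((hy i (by omega)).symm.trans (ih (by omega)))

/-- The set `j U = {j y | y ∈ U}`, described without reference to the admissibility of `j y`. -/
def consImage (j : Fin N) (U : Set (MarkovShift A)) : Set (MarkovShift A) :=
  {y | y.1 0 = j ∧ mshift A y ∈ U}

theorem isClopen_consImage (j : Fin N) {U : Set (MarkovShift A)} (hU : IsClopen U) :
    IsClopen (consImage j U) :=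
  (isClopen_setOf_markovShift_apply_eq 0 j).inter (hU.preimage continuous_mshift)

section ConsSwap

variable (j : Fin N) (U : Set (MarkovShift A)) (hU : ∀ y ∈ U, A j (y.1 0) = 1)

open Classical in
noncomputable def consSwap (y : MarkovShift A) : MarkovShift A :=
  if h : y ∈ U then mcons A j y (hU y h) else if y ∈ consImage j U then mshift A y else y

variable {j U}

theorem mcons_mem_consImage {y : MarkovShift A} (hy : y ∈ U) :
    mcons A j y (hU y hy) ∈ consImage j U :=
  ⟨rfl, hy⟩

theorem consSwap_of_mem {y : MarkovShift A} (hy : y ∈ U) :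
    consSwap j U hU y = mcons A j y (hU y hy) :=
  dif_pos hy

open Classical in
theorem continuous_consSwap (hUc : IsClopen U) : Continuous (consSwap j U hU) := by
  have hcons : Continuous fun y : MarkovShift A => (Nat.rec j fun m _ => y.1 m : ℕ → Fin N) :=
    continuous_pi fun n => by
      cases n with
      | zero => exact continuous_const
      | succ m => exact continuous_markovShift_apply m
  have hval : Subtype.val ∘ consSwap j U hU = fun y =>
      if y ∈ U then (Nat.rec j fun m _ => y.1 m : ℕ → Fin N)
      else if y ∈ consImage j U then (mshift A y).1 else y.1 := by
    funext y
    by_cases hyU : y ∈ U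
    · simp only [Function.comp, consSwap, dif_pos hyU, if_pos hyU]; rfl
    · simp only [Function.comp, consSwap, dif_neg hyU, if_neg hyU]; split_ifs <;> rfl
  refine continuous_induced_rng.2 ?_
  rw [hval]
  exact hUc.continuous_ite hcons ((isClopen_consImage j hUc).continuous_ite
    (continuous_subtype_val.comp continuous_mshift) continuous_subtype_val)

theorem consSwap_of_notMem {y : MarkovShift A} (hyU : y ∉ U) (hyV : y ∉ consImage j U) :
    consSwap j U hU y = y := by
  rw [consSwap, dif_neg hyU, if_neg hyV]

variable (hdisj : Disjoint U (consImage j U))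
include hdisj

theorem consSwap_of_mem_consImage {y : MarkovShift A} (hyV : y ∈ consImage j U) :
    consSwap j U hU y = mshift A y := by
  rw [consSwap, dif_neg (hdisj.notMem_of_mem_right hyV), if_pos hyV]

theorem consSwap_involutive : Function.Involutive (consSwap j U hU) := by
  intro y
  by_cases hyU : y ∈ U
  · rw [consSwap_of_mem hU hyU, consSwap_of_mem_consImage hU hdisj (mcons_mem_consImage hU hyU),
      mshift_mcons]
  by_cases hyV : y ∈ consImage j U
  · rw [consSwap_of_mem_consImage hU hdisj hyV, consSwap_of_mem hU hyV.2, mcons_mshift hyV.1]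
  · rw [consSwap_of_notMem hU hyU hyV, consSwap_of_notMem hU hyU hyV]

open Classical in
theorem mshift_iterate_consSwap (y : MarkovShift A) :
    (mshift A)^[if y ∈ U then 1 else 0] (consSwap j U hU y) =
      (mshift A)^[if y ∈ consImage j U then 1 else 0] y := by
  by_cases hyU : y ∈ U
  · simp [hyU, hdisj.notMem_of_mem_left hyU, consSwap_of_mem hU hyU]
  by_cases hyV : y ∈ consImage j U
  · simp [hyU, hyV, consSwap_of_mem_consImage hU hdisj hyV]
  · simp [hyU, hyV, consSwap_of_notMem hU hyU hyV]

noncomputable def consSwapHomeomorph (hUc : IsClopen U) : MarkovShift A ≃ₜ MarkovShift A where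
  toEquiv := (consSwap_involutive hU hdisj).toPerm
  continuous_toFun := continuous_consSwap hU hUc
  continuous_invFun := continuous_consSwap hU hUc

theorem consSwapHomeomorph_mem_topFullGroup (hUc : IsClopen U) :
    consSwapHomeomorph hU hdisj hUc ∈ topFullGroup A := by
  classical
  exact mem_topFullGroup_of_iterate_eq _
    (hUc.continuous_ite continuous_const continuous_const)
    ((isClopen_consImage j hUc).continuous_ite continuous_const continuous_const)
    (mshift_iterate_consSwap hU hdisj)

end ConsSwap

theorem disjoint_cylinder_consImage {x : MarkovShift A} {m : ℕ} {j : Fin N} (hm : x.1 m ≠ j) :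
    Disjoint (cylinder x m) (consImage j (cylinder x m)) :=
  Set.disjoint_left.2 fun y hyU hyV => hm <| calc
    x.1 m = y.1 m := (hyU m le_rfl).symm
    _ = y.1 0 := apply_eq_apply_zero_of_mem_cylinder_of_mshift_mem hyU hyV.2 m le_rfl
    _ = j := hyV.1

theorem mcons_eq_self {j : Fin N} {x : MarkovShift A} (hx : ∀ n, x.1 n = j)
    (h : A j (x.1 0) = 1) : mcons A j x h = x := by
  refine Subtype.ext (funext fun n => ?_)
  cases n with
  | zero => exact (hx 0).symm
  | succ n => exact (hx n).trans (hx (n + 1)).symm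

theorem exists_topFullGroup_elt_apply_eq_cons_general
    {N : ℕ} (A : Matrix (Fin N) (Fin N) ℕ)
    (x : MarkovShift A) (j : Fin N) (hj : A j (x.1 0) = 1) :
    ∃ τ ∈ topFullGroup A, τ x = mcons A j x hj := by
  by_cases hconst : ∀ n, x.1 n = j
  · exact ⟨Homeomorph.refl _, mem_topFullGroup_of_iterate_eq _ (k := 0) (l := 0)
      continuous_const continuous_const fun _ => rfl, (mcons_eq_self hconst hj).symm⟩
  obtain ⟨m, hm⟩ := not_forall.1 hconst
  have hU : ∀ y ∈ cylinder x m, A j (y.1 0) = 1 := fun y hy => (hy 0 m.zero_le).symm ▸ hj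
  have hdisj := disjoint_cylinder_consImage hm
  have hUc := isClopen_cylinder x m
  exact ⟨consSwapHomeomorph hU hdisj hUc, consSwapHomeomorph_mem_topFullGroup hU hdisj hUc,
    consSwap_of_mem hU fun _ _ => rfl⟩

/-- for every `x ∈ X_A` and every `j` with `jx = (j, x₁, x₂, …) ∈ X_A`,
there exists `τ ∈ [σ_A]_c` with `τ(x) = jx`. -/
theorem exists_topFullGroup_elt_apply_eq_cons
    {N : ℕ} (hN : 2 ≤ N) (A : Matrix (Fin N) (Fin N) ℕ)
    (hA : ∀ i j, A i j = 0 ∨ A i j = 1)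
    (x : MarkovShift A) (j : Fin N) (hj : A j (x.1 0) = 1) :
    ∃ τ ∈ topFullGroup A, τ x = mcons A j x hj :=
  exists_topFullGroup_elt_apply_eq_cons_general A x j hj
end

section
/- Assume A satisfies Cuntz–Krieger condition (I). For every τ ∈ [σ_A]_c, the unitary u_τ on ℓ²(X_A) defined by u_τ e_x = e_{τ(x)} (x ∈ X_A) belongs to O_A and satisfies u_τ M_f u_τ^* = M_{f ∘ τ^{-1}} for all f ∈ C(X_A,ℂ); in particular u_τ D_A u_τ^* = D_A, so u_τ lies in the normalizer N(O_A, D_A). Moreover the map τ ↦ u_τ from [σ_A]_c to the unitary group of O_A is a group homomorphism. -/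
open Matrix

noncomputable section

/-- The Hilbert space `ℓ²(X_A)` with orthonormal basis indexed by points of `X_A`. -/
abbrev MSHilbert {N : ℕ} (A : Matrix (Fin N) (Fin N) ℕ) : Type :=
  lp (fun _ : MarkovShift A => ℂ) 2

/-- The standard orthonormal basis vector `e_x` of `ℓ²(X_A)`. -/
def basisVec {N : ℕ} (A : Matrix (Fin N) (Fin N) ℕ) (x : MarkovShift A) :
    MSHilbert A :=
  letI : DecidableEq (MarkovShift A) := Classical.decEq _
  lp.single 2 x 1

/-- `T` acts on the basis by `T e_x = e_{ix}` if `ix ∈ X_A`, and `T e_x = 0` otherwise;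
this is the defining property of the canonical generating partial isometry `T_i`. -/
def IsShiftOp {N : ℕ} (A : Matrix (Fin N) (Fin N) ℕ) (i : Fin N)
    (T : MSHilbert A →L[ℂ] MSHilbert A) : Prop :=
  ∀ x : MarkovShift A,
    (∀ h : A i (x.1 0) = 1, T (basisVec A x) = basisVec A (mcons A i x h)) ∧
    (¬ A i (x.1 0) = 1 → T (basisVec A x) = 0)

/-- `T` is the family `T_1, …, T_N` of canonical generating partial isometries. -/
def IsGenFamily {N : ℕ} (A : Matrix (Fin N) (Fin N) ℕ)
    (T : Fin N → (MSHilbert A →L[ℂ] MSHilbert A)) : Prop :=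
  ∀ i, IsShiftOp A i (T i)

/-- `M` assigns to every `f ∈ C(X_A, ℂ)` the multiplication operator `M_f`,
characterized by `M_f e_x = f(x) • e_x`. -/
def IsMultOp {N : ℕ} (A : Matrix (Fin N) (Fin N) ℕ)
    (M : C(MarkovShift A, ℂ) → (MSHilbert A →L[ℂ] MSHilbert A)) : Prop :=
  ∀ (f : C(MarkovShift A, ℂ)) (x : MarkovShift A),
    M f (basisVec A x) = f x • basisVec A x

/-- The Cuntz–Krieger algebra `O_A`: the norm closure of the ∗-subalgebra of
`B(ℓ²(X_A))` generated by `T_1, …, T_N`. -/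
def CKalg {N : ℕ} (A : Matrix (Fin N) (Fin N) ℕ)
    (T : Fin N → (MSHilbert A →L[ℂ] MSHilbert A)) :
    StarSubalgebra ℂ (MSHilbert A →L[ℂ] MSHilbert A) :=
  (StarAlgebra.adjoin ℂ (Set.range T)).topologicalClosure

/-!
The orbit cocycles `k, l` of `τ` are continuous on the compact space `X_A`, so they, and the
first `max k` symbols of `τ x`, depend only on a prefix of `x` of some fixed length `n`. Hence
`τ` rewrites every length-`n` prefix `w` into a fixed word `μ_w`, i.e. `τ (w z) = μ_w z`, and
`u_τ = ∑_{|w| = n} T_{μ_w} T_w^*` is a finite sum of products of the generators. Everything else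
only uses that `u_τ` permutes the orthonormal basis `(e_x)`.
-/

theorem Stream'.take_eq_take_iff {α : Type*} {s t : Stream' α} {n : ℕ} :
    Stream'.take n s = Stream'.take n t ↔ ∀ i < n, s.get i = t.get i := by
  refine ⟨fun h i hi => ?_, fun h => List.ext_getElem? fun i => ?_⟩
  · simpa [Stream'.getElem?_take hi] using congrArg (·[i]?) h
  · by_cases hi : i < n
    · rw [Stream'.getElem?_take hi, Stream'.getElem?_take hi, h i hi]
    · rw [List.getElem?_eq_none (by simpa using hi), List.getElem?_eq_none (by simpa using hi)]

open PiNat in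
theorem Continuous.exists_apply_eq_of_mem_cylinder {X α β : Type*} [TopologicalSpace X]
    [CompactSpace X] [TopologicalSpace α] [DiscreteTopology α] [TopologicalSpace β]
    [DiscreteTopology β] {f : X → β} (hf : Continuous f) {π : X → ℕ → α}
    (hπ : Topology.IsInducing π) :
    ∃ n, ∀ y z, π z ∈ cylinder (π y) n → f z = f y := by
  have h_local : ∀ y, ∃ m, π ⁻¹' cylinder (π y) m ⊆ f ⁻¹' {f y} := by
    intro y
    obtain ⟨V, hV, hV_eq⟩ := hπ.isOpen_iff.1 (hf.isOpen_preimage {f y} (isOpen_discrete _))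
    have hy : π y ∈ V := (Set.ext_iff.1 hV_eq y).2 rfl
    obtain ⟨_, ⟨x, m, rfl⟩, hyx, hsub⟩ :=
      (isTopologicalBasis_cylinders fun _ => α).exists_subset_of_mem_open hy hV
    exact ⟨m, fun z hz => hV_eq ▸ hsub (mem_cylinder_iff_eq.1 hyx ▸ hz)⟩
  choose m hm using h_local
  obtain ⟨t, ht⟩ := CompactSpace.elim_nhds_subcover (fun y => π ⁻¹' cylinder (π y) (m y))
    fun y => ((isOpen_cylinder _ _ _).preimage hπ.continuous).mem_nhds (self_mem_cylinder _ _)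
  refine ⟨t.sup m, fun y z hz => ?_⟩
  obtain ⟨x, hxt, hyx⟩ : ∃ x ∈ t, π y ∈ cylinder (π x) (m x) := by
    simpa using Set.eq_univ_iff_forall.1 ht y
  have hzx : π z ∈ cylinder (π x) (m x) :=
    mem_cylinder_iff_eq.1 hyx ▸ cylinder_anti _ (Finset.le_sup hxt) hz
  exact (hm x hzx).trans (hm x hyx).symm

lemma image_range_eq_of_comp_homeomorph {X Y Z : Type*} [TopologicalSpace X]
    [TopologicalSpace Z] {M : C(X, Z) → Y} {c : Y → Y} (τ : X ≃ₜ X)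
    (h : ∀ f, c (M f) = M (f.comp (τ.symm : C(X, X)))) :
    c '' Set.range M = Set.range M := by
  rw [← Set.range_comp]
  refine le_antisymm ?_ ?_
  · rintro _ ⟨f, rfl⟩
    exact ⟨_, (h f).symm⟩
  · rintro _ ⟨g, rfl⟩
    refine ⟨g.comp (τ : C(X, X)), ?_⟩
    simp [h]

section CuntzKrieger

variable {N : ℕ} {A : Matrix (Fin N) (Fin N) ℕ}

lemma basisVec_eq_hilbertBasis :
    basisVec A = ⇑(default : HilbertBasis (MarkovShift A) ℂ (MSHilbert A)) :=
  rfl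

lemma orthonormal_basisVec : Orthonormal ℂ (basisVec A) :=
  basisVec_eq_hilbertBasis ▸ HilbertBasis.orthonormal _

lemma inner_basisVec_self (x : MarkovShift A) : inner ℂ (basisVec A x) (basisVec A x) = 1 := by
  rw [inner_self_eq_norm_sq_to_K, orthonormal_basisVec.1 x]
  norm_num

lemma inner_basisVec_of_ne {x y : MarkovShift A} (h : x ≠ y) :
    inner ℂ (basisVec A x) (basisVec A y) = 0 :=
  orthonormal_basisVec.2 h

lemma inner_basisVec_left (x : MarkovShift A) (f : MSHilbert A) :
    inner ℂ (basisVec A x) f = f x :=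
  ((default : HilbertBasis (MarkovShift A) ℂ (MSHilbert A)).repr_apply_apply f x).symm

lemma ContinuousLinearMap.ext_basisVec {E : Type*} [TopologicalSpace E] [AddCommMonoid E]
    [Module ℂ E] [T2Space E] {S R : MSHilbert A →L[ℂ] E}
    (h : ∀ x, S (basisVec A x) = R (basisVec A x)) : S = R := by
  refine ContinuousLinearMap.ext_on ?_ (Set.forall_mem_range.2 h)
  rw [basisVec_eq_hilbertBasis]
  exact Submodule.dense_iff_topologicalClosure_eq_top.2 (HilbertBasis.dense_span _)

lemma star_apply_basisVec_apply (S : MSHilbert A →L[ℂ] MSHilbert A) (y z : MarkovShift A) :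
    star S (basisVec A z) y = inner ℂ (S (basisVec A y)) (basisVec A z) := by
  rw [← inner_basisVec_left, ContinuousLinearMap.star_eq_adjoint,
    ContinuousLinearMap.adjoint_inner_right]

lemma star_apply_basisVec_eq_of_inner {S : MSHilbert A →L[ℂ] MSHilbert A} {z : MarkovShift A}
    {v : MSHilbert A}
    (h : ∀ y, inner ℂ (S (basisVec A y)) (basisVec A z) = inner ℂ (basisVec A y) v) :
    star S (basisVec A z) = v := by
  ext y
  rw [star_apply_basisVec_apply, h, inner_basisVec_left]

lemma star_apply_basisVec_of_apply_basisVec {S : MSHilbert A →L[ℂ] MSHilbert A}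
    (e : MarkovShift A ≃ MarkovShift A) (h : ∀ x, S (basisVec A x) = basisVec A (e x))
    (z : MarkovShift A) : star S (basisVec A z) = basisVec A (e.symm z) := by
  refine star_apply_basisVec_eq_of_inner fun y => ?_
  rw [h]
  by_cases hy : e y = z
  · rw [← hy, e.symm_apply_apply, inner_basisVec_self, inner_basisVec_self]
  · rw [inner_basisVec_of_ne hy, inner_basisVec_of_ne (mt e.eq_symm_apply.1 hy)]

lemma mem_unitary_of_apply_basisVec {S : MSHilbert A →L[ℂ] MSHilbert A}
    (e : MarkovShift A ≃ MarkovShift A) (h : ∀ x, S (basisVec A x) = basisVec A (e x)) :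
    S ∈ unitary (MSHilbert A →L[ℂ] MSHilbert A) := by
  have h_star := star_apply_basisVec_of_apply_basisVec e h
  refine Unitary.mem_iff.2 ⟨?_, ?_⟩ <;> refine ContinuousLinearMap.ext_basisVec fun x => ?_ <;>
    simp [h, h_star]

lemma mcons_eq_iff {i : Fin N} {y z : MarkovShift A} {h : A i (y.1 0) = 1} :
    mcons A i y h = z ↔ z.1 0 = i ∧ mshift A z = y := by
  constructor
  · rintro rfl
    exact ⟨rfl, rfl⟩
  · rintro ⟨rfl, rfl⟩
    ext (_ | _) <;> rfl

namespace IsShiftOp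

variable {i : Fin N} {T : MSHilbert A →L[ℂ] MSHilbert A}

lemma apply_basisVec_mshift (hT : IsShiftOp A i T) {y : MarkovShift A} (hy : y.1 0 = i) :
    T (basisVec A (mshift A y)) = basisVec A y := by
  rw [(hT _).1 (hy ▸ y.2 0), mcons_eq_iff.2 ⟨hy, rfl⟩]

lemma star_apply_basisVec (hT : IsShiftOp A i T) (z : MarkovShift A) :
    star T (basisVec A z) = if z.1 0 = i then basisVec A (mshift A z) else 0 := by
  refine star_apply_basisVec_eq_of_inner fun y => ?_
  split_ifs with hz
  · by_cases hy : y = mshift A z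
    · rw [hy, hT.apply_basisVec_mshift hz, inner_basisVec_self, inner_basisVec_self]
    · rw [inner_basisVec_of_ne hy]
      by_cases hA : A i (y.1 0) = 1
      · exact (hT y).1 hA ▸ inner_basisVec_of_ne fun h => hy (mcons_eq_iff.1 h).2.symm
      · rw [(hT y).2 hA, inner_zero_left]
  · rw [inner_zero_right]
    by_cases hA : A i (y.1 0) = 1
    · exact (hT y).1 hA ▸ inner_basisVec_of_ne fun h => hz (mcons_eq_iff.1 h).1
    · rw [(hT y).2 hA, inner_zero_left]

end IsShiftOp

namespace IsGenFamily

variable {T : Fin N → (MSHilbert A →L[ℂ] MSHilbert A)}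

lemma prod_map_apply_basisVec (hT : IsGenFamily A T) (w : List (Fin N))
    {x y : MarkovShift A} (h : y.1 = w ++ₛ x.1) :
    (w.map T).prod (basisVec A x) = basisVec A y := by
  induction w generalizing y with
  | nil => simp [Subtype.ext h]
  | cons i w ih =>
    rw [List.map_cons, List.prod_cons, mul_apply_eq_comp,
      ih (y := mshift A y) (funext fun n => congrFun h (n + 1)),
      (hT i).apply_basisVec_mshift (congrFun h 0)]

lemma star_prod_map_apply_basisVec (hT : IsGenFamily A T) (w : List (Fin N))
    (z : MarkovShift A) :
    star (w.map T).prod (basisVec A z) =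
      if Stream'.take w.length z.1 = w then basisVec A ((mshift A)^[w.length] z) else 0 := by
  induction w generalizing z with
  | nil =>
    rw [if_pos (show Stream'.take [].length z.1 = [] from rfl)]
    simp
  | cons i w ih =>
    -- `z.1` has type `ℕ → Fin N` rather than `Stream' (Fin N)`, which defeats `rw` with the
    -- `Stream'` API; hence the unfoldings by `rfl`.
    rw [List.map_cons, List.prod_cons, star_mul, mul_apply_eq_comp,
      (hT i).star_apply_basisVec, List.length_cons,
      show Stream'.take (w.length + 1) z.1 = z.1 0 :: Stream'.take w.length (mshift A z).1 from rfl]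
    by_cases h0 : z.1 0 = i
    · rw [if_pos h0, ih, Function.iterate_succ_apply]
      by_cases hw : Stream'.take w.length (mshift A z).1 = w
      · rw [if_pos hw, if_pos (List.cons_eq_cons.2 ⟨h0, hw⟩)]
      · rw [if_neg hw, if_neg fun h => hw (List.cons_eq_cons.1 h).2]
    · rw [if_neg h0, map_zero, if_neg fun h => h0 (List.cons_eq_cons.1 h).1]

end IsGenFamily

instance : CompactSpace (MarkovShift A) := by
  have : IsClosed {x : ℕ → Fin N | ∀ n, A (x n) (x (n + 1)) = 1} := by
    rw [Set.ofPred_forall]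
    exact isClosed_iInter fun n => isClosed_eq (by fun_prop) continuous_const
  exact isCompact_iff_compactSpace.1 this.isCompact

lemma mshift_iterate_apply (k : ℕ) (x : MarkovShift A) (i : ℕ) :
    ((mshift A)^[k] x).1 i = x.1 (i + k) := by
  induction k generalizing x with
  | zero => rfl
  | succ k ih => rw [Function.iterate_succ_apply, ih]; rfl

section PrefixRewriting

variable {τ : MarkovShift A → MarkovShift A} {k l : MarkovShift A → ℕ}

lemma exists_local_prefix_rewriting (hτ : Continuous τ) (hk : Continuous k) (hl : Continuous l)
    (hkl : ∀ x, (mshift A)^[k x] (τ x) = (mshift A)^[l x] x) :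
    ∃ n, ∀ y : MarkovShift A, ∃ μ : List (Fin N), ∀ z : MarkovShift A,
      z.1 ∈ PiNat.cylinder y.1 n → (τ z).1 = μ ++ₛ ((mshift A)^[n] z).1 := by
  have h_coord : ∀ x j, (τ x).1 (j + k x) = x.1 (j + l x) := fun x j => by
    simpa only [mshift_iterate_apply] using congrArg (fun s => s.1 j) (hkl x)
  obtain ⟨K, hK⟩ := (isCompact_range hk).bddAbove
  obtain ⟨L, hL⟩ := (isCompact_range hl).bddAbove
  have h_cont : Continuous fun x => (k x, l x, fun i : Fin K => (τ x).1 i) :=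
    hk.prodMk (hl.prodMk (continuous_pi fun i =>
      (continuous_apply (i : ℕ)).comp (continuous_subtype_val.comp hτ)))
  obtain ⟨n, hn⟩ :=
    h_cont.exists_apply_eq_of_mem_cylinder (X := MarkovShift A) Topology.IsInducing.subtypeVal
  set m := max n L
  -- On the cylinder of `y`, `τ z` copies `τ y` up to position `k y` and then reads `z` from
  -- position `l y` on, which is still inside the cylinder until position `m`.
  refine ⟨m, fun y => ⟨Stream'.take (k y + (m - l y)) (τ y).1, fun z hz => ?_⟩⟩
  obtain ⟨hkz, hlz, hτz⟩ : k z = k y ∧ l z = l y ∧ ∀ i : Fin K, (τ z).1 i = (τ y).1 i := by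
    simpa [funext_iff] using hn y z (PiNat.cylinder_anti _ (le_max_left _ _) hz)
  have hly : l y ≤ m := (hL ⟨y, rfl⟩).trans (le_max_right _ _)
  have hz_coord := h_coord z
  rw [hkz, hlz] at hz_coord
  refine (Stream'.append_take_drop (k y + (m - l y)) (τ z).1).symm.trans ?_
  congr 1
  · refine Stream'.take_eq_take_iff.2 fun i hi => ?_
    by_cases hik : i < k y
    · exact hτz ⟨i, hik.trans_le (hK ⟨y, rfl⟩)⟩
    · obtain ⟨j, rfl⟩ := Nat.exists_eq_add_of_le (not_lt.1 hik)
      show (τ z).1 (k y + j) = (τ y).1 (k y + j)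
      rw [add_comm, hz_coord, h_coord y]
      exact hz _ (by omega)
  · funext i
    show (τ z).1 (i + (k y + (m - l y))) = ((mshift A)^[m] z).1 i
    rw [mshift_iterate_apply, show i + (k y + (m - l y)) = i + (m - l y) + k y by omega,
      hz_coord, show i + (m - l y) + l y = i + m by omega]

lemma exists_prefix_rewriting (hτ : Continuous τ) (hk : Continuous k) (hl : Continuous l)
    (hkl : ∀ x, (mshift A)^[k x] (τ x) = (mshift A)^[l x] x) :
    ∃ (n : ℕ) (μ : List (Fin N) → List (Fin N)), ∀ z : MarkovShift A,
      (τ z).1 = μ (Stream'.take n z.1) ++ₛ ((mshift A)^[n] z).1 := by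
  classical
  obtain ⟨n, h⟩ := exists_local_prefix_rewriting hτ hk hl hkl
  choose μ hμ using h
  refine ⟨n, fun w => if hw : ∃ y : MarkovShift A, Stream'.take n y.1 = w then μ hw.choose else [],
    fun z => ?_⟩
  have hz : ∃ y : MarkovShift A, Stream'.take n y.1 = Stream'.take n z.1 := ⟨z, rfl⟩
  dsimp only
  rw [dif_pos hz]
  exact hμ _ z (Stream'.take_eq_take_iff.1 hz.choose_spec.symm)

end PrefixRewriting

lemma IsGenFamily.mem_CKalg_of_prefix_rewriting {T : Fin N → (MSHilbert A →L[ℂ] MSHilbert A)}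
    (hT : IsGenFamily A T) {τ : MarkovShift A → MarkovShift A} {n : ℕ}
    {μ : List (Fin N) → List (Fin N)}
    (hμ : ∀ z, (τ z).1 = μ (Stream'.take n z.1) ++ₛ ((mshift A)^[n] z).1)
    {u : MSHilbert A →L[ℂ] MSHilbert A} (hu : ∀ x, u (basisVec A x) = basisVec A (τ x)) :
    u ∈ CKalg A T := by
  have hu_sum : u = ∑ w : List.Vector (Fin N) n,
      ((μ w.toList).map T).prod * star (w.toList.map T).prod := by
    refine ContinuousLinearMap.ext_basisVec fun z => ?_
    rw [hu, _root_.sum_apply,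
      Fintype.sum_eq_single ⟨Stream'.take n z.1, Stream'.length_take n _⟩ fun w hw => ?_]
    · rw [mul_apply_eq_comp, hT.star_prod_map_apply_basisVec, List.Vector.toList_mk,
        Stream'.length_take n z.1, if_pos rfl, hT.prod_map_apply_basisVec _ (hμ z)]
    · rw [mul_apply_eq_comp, hT.star_prod_map_apply_basisVec, w.toList_length, if_neg, map_zero]
      exact fun h => hw (List.Vector.eq _ _ h.symm)
  have h_word : ∀ w : List (Fin N), (w.map T).prod ∈ StarAlgebra.adjoin ℂ (Set.range T) :=
    fun w => list_prod_mem fun _ hx => by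
      obtain ⟨i, -, rfl⟩ := List.mem_map.1 hx
      exact StarAlgebra.subset_adjoin ℂ _ (Set.mem_range_self i)
  rw [hu_sum]
  exact StarSubalgebra.le_topologicalClosure _
    (sum_mem fun w _ => mul_mem (h_word _) (star_mem (h_word _)))

lemma conj_multOp_eq {M : C(MarkovShift A, ℂ) → (MSHilbert A →L[ℂ] MSHilbert A)}
    (hM : IsMultOp A M) {τ : MarkovShift A ≃ₜ MarkovShift A} {u : MSHilbert A →L[ℂ] MSHilbert A}
    (hu : ∀ x, u (basisVec A x) = basisVec A (τ x)) (f : C(MarkovShift A, ℂ)) :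
    u * M f * star u = M (f.comp (τ.symm : C(MarkovShift A, MarkovShift A))) := by
  refine ContinuousLinearMap.ext_basisVec fun z => ?_
  rw [mul_apply_eq_comp, mul_apply_eq_comp,
    star_apply_basisVec_of_apply_basisVec τ.toEquiv hu, hM, map_smul, hu, hM]
  simp

end CuntzKrieger

theorem unitary_of_topFullGroup_elt_general
    {N : ℕ} (A : Matrix (Fin N) (Fin N) ℕ)
    (T : Fin N → (MSHilbert A →L[ℂ] MSHilbert A)) (hT : IsGenFamily A T)
    (M : C(MarkovShift A, ℂ) → (MSHilbert A →L[ℂ] MSHilbert A)) (hM : IsMultOp A M)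
    (τ : MarkovShift A ≃ₜ MarkovShift A) (hτ : τ ∈ topFullGroup A)
    (u : MSHilbert A →L[ℂ] MSHilbert A)
    (hu : ∀ x : MarkovShift A, u (basisVec A x) = basisVec A (τ x)) :
    u ∈ unitary (MSHilbert A →L[ℂ] MSHilbert A)
    ∧ u ∈ CKalg A T
    ∧ (∀ f : C(MarkovShift A, ℂ),
        u * M f * star u = M (f.comp (τ.symm : C(MarkovShift A, MarkovShift A))))
    ∧ ((fun a => u * a * star u) '' Set.range M = Set.range M)
    ∧ (∀ τ₁ τ₂ : MarkovShift A ≃ₜ MarkovShift A,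
        τ₁ ∈ topFullGroup A → τ₂ ∈ topFullGroup A →
        ∀ u₁₂ u₁ u₂ : MSHilbert A →L[ℂ] MSHilbert A,
        (∀ x, u₁₂ (basisVec A x) = basisVec A ((τ₂.trans τ₁) x)) →
        (∀ x, u₁ (basisVec A x) = basisVec A (τ₁ x)) →
        (∀ x, u₂ (basisVec A x) = basisVec A (τ₂ x)) →
        u₁₂ = u₁ * u₂) := by
  obtain ⟨-, k, l, hk, hl, hkl⟩ := hτ
  obtain ⟨n, μ, hμ⟩ := exists_prefix_rewriting τ.continuous hk hl hkl
  refine ⟨mem_unitary_of_apply_basisVec τ.toEquiv hu, hT.mem_CKalg_of_prefix_rewriting hμ hu,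
    conj_multOp_eq hM hu, image_range_eq_of_comp_homeomorph τ (conj_multOp_eq hM hu), ?_⟩
  intro τ₁ τ₂ _ _ u₁₂ u₁ u₂ h₁₂ h₁ h₂
  exact ContinuousLinearMap.ext_basisVec fun x => by rw [h₁₂, mul_apply_eq_comp, h₂, h₁]; rfl

/-- if `A` satisfies condition (I) and `τ ∈ [σ_A]_c`, then the unitary
`u_τ` determined by `u_τ e_x = e_{τ(x)}` is a unitary belonging to `O_A`, it satisfies
`u_τ M_f u_τ^* = M_{f ∘ τ⁻¹}` for all `f ∈ C(X_A, ℂ)` (hence `u_τ D_A u_τ^* = D_A`,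
i.e. `u_τ ∈ N(O_A, D_A)`), and `τ ↦ u_τ` is a group homomorphism. -/
theorem unitary_of_topFullGroup_elt
    {N : ℕ} (hN : 2 ≤ N) (A : Matrix (Fin N) (Fin N) ℕ)
    (hA : ∀ i j, A i j = 0 ∨ A i j = 1) (hI : ConditionI A)
    (T : Fin N → (MSHilbert A →L[ℂ] MSHilbert A)) (hT : IsGenFamily A T)
    (M : C(MarkovShift A, ℂ) → (MSHilbert A →L[ℂ] MSHilbert A)) (hM : IsMultOp A M)
    (τ : MarkovShift A ≃ₜ MarkovShift A) (hτ : τ ∈ topFullGroup A)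
    (u : MSHilbert A →L[ℂ] MSHilbert A)
    (hu : ∀ x : MarkovShift A, u (basisVec A x) = basisVec A (τ x)) :
    u ∈ unitary (MSHilbert A →L[ℂ] MSHilbert A)
    ∧ u ∈ CKalg A T
    ∧ (∀ f : C(MarkovShift A, ℂ),
        u * M f * star u = M (f.comp (τ.symm : C(MarkovShift A, MarkovShift A))))
    ∧ ((fun a => u * a * star u) '' Set.range M = Set.range M)
    ∧ (∀ τ₁ τ₂ : MarkovShift A ≃ₜ MarkovShift A,
        τ₁ ∈ topFullGroup A → τ₂ ∈ topFullGroup A →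
        ∀ u₁₂ u₁ u₂ : MSHilbert A →L[ℂ] MSHilbert A,
        (∀ x, u₁₂ (basisVec A x) = basisVec A ((τ₂.trans τ₁) x)) →
        (∀ x, u₁ (basisVec A x) = basisVec A (τ₁ x)) →
        (∀ x, u₂ (basisVec A x) = basisVec A (τ₂ x)) →
        u₁₂ = u₁ * u₂) :=
  unitary_of_topFullGroup_elt_general A T hT M hM τ hτ u hu
end
end

section
/- Assume A satisfies Cuntz–Krieger condition (I). Let u ∈ F_A be a partial isometry with u D_A u^* ⊆ D_A and u^* D_A u ⊆ D_A, so that u^*u = M_{χ_{X_u}} and uu^* = M_{χ_{Y_u}} for clopen subsets X_u, Y_u of X_A, and suppose h : X_u → Y_u is a homeomorphism such that u M_g u^* = M_{g ∘ h^{-1}} for every g ∈ C(X_A,ℂ) vanishing off X_u. Then there exists k ∈ ℕ such that σ_A^k(h(x)) = σ_A^k(x) for every x ∈ X_u; equivalently, writing y = h(x), one has y_n = x_n for all n > k. -/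
open Matrix

noncomputable section

/-- The operator `T_{μ₁}⋯T_{μ_n}` associated to the word `μ₁⋯μ_n = (μ 0, …, μ (n-1))`. -/
def wordOp {N : ℕ} (A : Matrix (Fin N) (Fin N) ℕ)
    (T : Fin N → (MSHilbert A →L[ℂ] MSHilbert A)) (n : ℕ) (μ : ℕ → Fin N) :
    MSHilbert A →L[ℂ] MSHilbert A :=
  ((List.range n).map fun i => T (μ i)).prod

/-- The word `(μ 0, …, μ (n-1))` is admissible for `X_A`. -/
def IsAdmissible {N : ℕ} (A : Matrix (Fin N) (Fin N) ℕ) (n : ℕ) (μ : ℕ → Fin N) :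
    Prop :=
  ∃ x : MarkovShift A, ∀ i < n, x.1 i = μ i

/-- The canonical AF-subalgebra `F_A ⊆ O_A`: the norm closure of the ∗-subalgebra
generated by the elements `T_μ T_ν^*` with `μ, ν` admissible words of equal length. -/
def AFalg {N : ℕ} (A : Matrix (Fin N) (Fin N) ℕ)
    (T : Fin N → (MSHilbert A →L[ℂ] MSHilbert A)) :
    StarSubalgebra ℂ (MSHilbert A →L[ℂ] MSHilbert A) :=
  (StarAlgebra.adjoin ℂ
    { a | ∃ (n : ℕ) (μ ν : ℕ → Fin N), IsAdmissible A n μ ∧ IsAdmissible A n ν ∧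
        a = wordOp A T n μ * star (wordOp A T n ν) }).topologicalClosure


/-!
Every element `F` of the ∗-algebra generated by the `T_μ T_ν^*` (`|μ| = |ν|`) has matrix entries
`⟪e_y, F e_x⟫` vanishing unless `σ^k y = σ^k x`, for a `k` depending only on `F`: each `T_μ T_ν^*`
has this property with `k = |μ|`, and it survives sums, products and adjoints. On the other hand,
`u^*u e_x = e_x` and `u M_g u^* = M_{g ∘ h⁻¹}` force `u e_x` to be a unit multiple of `e_{h x}`
for `x ∈ X_u`. So if `‖u - F‖ < 1` and `σ^k (h x) ≠ σ^k x`, then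
`1 = |⟪e_{h x}, (u - F) e_x⟫| ≤ ‖u - F‖`, a contradiction.
-/

open scoped lp ComplexConjugate

section Topology

instance Subtype.totallySeparatedSpace {X : Type*} [TopologicalSpace X] [TotallySeparatedSpace X]
    (p : X → Prop) : TotallySeparatedSpace (Subtype p) :=
  totallySeparatedSpace_iff_exists_isClopen.mpr fun x y hxy => by
    obtain ⟨U, hU, hxU, hyU⟩ := exists_isClopen_of_totally_separated (Subtype.val_injective.ne hxy)
    exact ⟨Subtype.val ⁻¹' U, hU.preimage continuous_subtype_val, hxU, hyU⟩

theorem IsClopen.image_subtype_val {X : Type*} [TopologicalSpace X] {s : Set X} (hs : IsClopen s)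
    {t : Set s} (ht : IsClopen t) : IsClopen (Subtype.val '' t) :=
  ⟨hs.1.isClosedMap_subtype_val _ ht.1, hs.2.isOpenMap_subtype_val _ ht.2⟩

theorem Homeomorph.exists_continuousMap_comp_symm_eq {X R : Type*} [TopologicalSpace X]
    [TotallySeparatedSpace X] [TopologicalSpace R] [Zero R] [One R] {Xu Yu : Set X}
    (hXu : IsClopen Xu) (hYu : IsClopen Yu) (h : Xu ≃ₜ Yu) {x : Xu} {z : X} (hz : z ≠ h x) :
    ∃ g g' : C(X, R), (∀ w ∉ Xu, g w = 0) ∧ (∀ w ∉ Yu, g' w = 0) ∧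
      (∀ w : Yu, g' w = g (h.symm w)) ∧ g x = 1 ∧ g' z = 0 := by
  obtain ⟨U, hU, hxU, hzU⟩ := exists_isClopen_of_totally_separated (Ne.symm hz)
  set E : Set X := Subtype.val '' (h ⁻¹' (Subtype.val ⁻¹' U))
  have hE : IsClopen E :=
    hXu.image_subtype_val ((hU.preimage continuous_subtype_val).preimage h.continuous)
  have hmemE : ∀ w : Yu, (h.symm w : X) ∈ E ↔ (w : X) ∈ U := fun w => by
    simp only [E, Subtype.val_injective.mem_set_image, Set.mem_preimage, h.apply_symm_apply]
  refine ⟨⟨E.indicator 1, hE.continuous_indicator continuous_const⟩,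
    ⟨(U ∩ Yu).indicator 1, (hU.inter hYu).continuous_indicator continuous_const⟩,
    fun w hw => Set.indicator_of_notMem (fun hwE => ?_) _,
    fun w hw => Set.indicator_of_notMem (fun hwU => hw hwU.2) _,
    fun w => ?_, ?_, Set.indicator_of_notMem (fun hzU' => hzU hzU'.1) _⟩
  · obtain ⟨w', -, rfl⟩ := hwE
    exact hw w'.2
  · show (U ∩ Yu).indicator 1 (w : X) = E.indicator 1 (h.symm w : X)
    by_cases hw : (w : X) ∈ U
    · rw [Set.indicator_of_mem (Set.mem_inter hw w.2), Set.indicator_of_mem ((hmemE w).2 hw)]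
      rfl
    · rw [Set.indicator_of_notMem fun hw' => hw hw'.1,
        Set.indicator_of_notMem fun hw' => hw ((hmemE w).1 hw')]
  · exact Set.indicator_of_mem
      (Set.mem_image_of_mem _ (show x ∈ h ⁻¹' (Subtype.val ⁻¹' U) from hxU)) _

end Topology

theorem ContinuousLinearMap.norm_apply_eq_of_star_mul_self_apply {𝕜 E : Type*} [RCLike 𝕜]
    [NormedAddCommGroup E] [InnerProductSpace 𝕜 E] [CompleteSpace E] (u : E →L[𝕜] E) {v : E}
    (hv : (star u * u) v = v) : ‖u v‖ = ‖v‖ := by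
  have hsq := u.apply_norm_sq_eq_inner_adjoint_left v
  rw [← star_eq_adjoint, ← ContinuousLinearMap.mul_def, hv, inner_self_eq_norm_sq] at hsq
  exact (pow_left_inj₀ (norm_nonneg _) (norm_nonneg _) two_ne_zero).mp hsq

section Hilbert

variable {X : Type*} [DecidableEq X]

theorem hasSum_mul_apply_single_apply (B : ℓ²(X, ℂ) →L[ℂ] ℓ²(X, ℂ)) (v : ℓ²(X, ℂ)) (y : X) :
    HasSum (fun z => v z * B (lp.single 2 z 1) y) (B v y) := by
  have hterm (z : X) :
      v z * B (lp.single 2 z 1) y = (lp.evalCLM ℂ _ 2 y).comp B (lp.single 2 z (v z)) := by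
    have hsingle : lp.single 2 z (v z) = v z • (lp.single 2 z 1 : ℓ²(X, ℂ)) := by
      rw [← lp.single_smul, smul_eq_mul, mul_one]
    rw [hsingle, map_smul]
    rfl
  simp only [hterm]
  exact (lp.hasSum_single (by norm_num) v).mapL _

theorem apply_eq_mul_apply_of_apply_single {B : ℓ²(X, ℂ) →L[ℂ] ℓ²(X, ℂ)} {f : X → ℂ}
    (hB : ∀ x, B (lp.single 2 x 1) = f x • lp.single 2 x 1) (v : ℓ²(X, ℂ)) (y : X) :
    B v y = f y * v y := by
  refine (hasSum_mul_apply_single_apply B v y).unique ?_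
  convert hasSum_single (f := fun z => v z * B (lp.single 2 z 1) y) y fun z hz => ?_ using 1
  · simp [hB, mul_comm]
  · simp [hB, hz.symm]

theorem star_apply_single_apply (B : ℓ²(X, ℂ) →L[ℂ] ℓ²(X, ℂ)) (x y : X) :
    star B (lp.single 2 x 1) y = conj (B (lp.single 2 y 1) x) := by
  rw [ContinuousLinearMap.star_eq_adjoint]
  have hy := lp.inner_single_left (𝕜 := ℂ) y (1 : ℂ) (B.adjoint (lp.single 2 x 1))
  have hx := lp.inner_single_right (𝕜 := ℂ) x (1 : ℂ) (B (lp.single 2 y 1))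
  rw [ContinuousLinearMap.adjoint_inner_right] at hy
  simp_all

theorem norm_apply_single_apply_le_opNorm (B : ℓ²(X, ℂ) →L[ℂ] ℓ²(X, ℂ)) (x y : X) :
    ‖B (lp.single 2 x 1) y‖ ≤ ‖B‖ :=
  calc ‖B (lp.single 2 x 1) y‖ ≤ ‖B (lp.single 2 x 1)‖ := lp.norm_apply_le_norm (by norm_num) _ _
    _ ≤ ‖B‖ * ‖(lp.single 2 x 1 : ℓ²(X, ℂ))‖ := B.le_opNorm _
    _ = ‖B‖ := by rw [lp.norm_single (by norm_num), norm_one, mul_one]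

theorem lp.norm_eq_norm_apply_of_forall_ne {E : X → Type*} [∀ i, NormedAddCommGroup (E i)]
    {p : ENNReal} (hp : 0 < p) {v : lp E p} {y : X} (hv : ∀ z ≠ y, v z = 0) : ‖v‖ = ‖v y‖ := by
  have : v = lp.single p y (v y) := lp.ext <| funext fun z => by
    by_cases hz : z = y
    · subst hz; rw [lp.single_apply_self]
    · rw [lp.single_apply_ne p y _ hz, hv z hz]
  conv_lhs => rw [this]
  exact lp.norm_single hp y (v y)

-- Entries are indexed as `(B e_x) y = ⟪e_y, B e_x⟫`: row `y` comes first, as in `R y x`.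
def MatrixSupportedIn (R : X → X → Prop) (B : ℓ²(X, ℂ) →L[ℂ] ℓ²(X, ℂ)) : Prop :=
  ∀ x y, B (lp.single 2 x 1) y ≠ 0 → R y x

namespace MatrixSupportedIn

variable {R S : X → X → Prop} {B C : ℓ²(X, ℂ) →L[ℂ] ℓ²(X, ℂ)}

theorem mono (hB : MatrixSupportedIn R B) (hRS : ∀ y x, R y x → S y x) :
    MatrixSupportedIn S B :=
  fun x y hxy => hRS y x (hB x y hxy)

theorem add (hB : MatrixSupportedIn R B) (hC : MatrixSupportedIn R C) :
    MatrixSupportedIn R (B + C) := by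
  intro x y hxy
  by_cases hBxy : B (lp.single 2 x 1) y = 0
  · exact hC x y fun hCxy => hxy (by simp [hBxy, hCxy])
  · exact hB x y hBxy

theorem mul (hB : MatrixSupportedIn R B) (hC : MatrixSupportedIn S C) :
    MatrixSupportedIn (Relation.Comp R S) (B * C) := by
  intro x y hxy
  obtain ⟨z, hz⟩ : ∃ z, C (lp.single 2 x 1) z * B (lp.single 2 z 1) y ≠ 0 := by
    by_contra! hzero
    exact hxy ((hasSum_mul_apply_single_apply B _ y).unique (by simp [hzero]))
  exact ⟨z, hB z y (right_ne_zero_of_mul hz), hC x z (left_ne_zero_of_mul hz)⟩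

theorem star (hB : MatrixSupportedIn R B) : MatrixSupportedIn (flip R) (star B) := by
  intro x y hxy
  rw [star_apply_single_apply, map_ne_zero] at hxy
  exact hB y x hxy

theorem algebraMap (c : ℂ) :
    MatrixSupportedIn Eq (algebraMap ℂ (ℓ²(X, ℂ) →L[ℂ] ℓ²(X, ℂ)) c) := by
  intro x y hxy
  by_contra hne
  simp [Algebra.algebraMap_eq_smul_one, hne] at hxy

end MatrixSupportedIn

theorem apply_single_apply_eq_zero_of_ne [TopologicalSpace X] [TotallySeparatedSpace X]
    {M : C(X, ℂ) → ℓ²(X, ℂ) →L[ℂ] ℓ²(X, ℂ)}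
    (hM : ∀ f x, M f (lp.single 2 x 1) = f x • lp.single 2 x 1) {u : ℓ²(X, ℂ) →L[ℂ] ℓ²(X, ℂ)}
    {Xu Yu : Set X} (hXu : IsClopen Xu) (hYu : IsClopen Yu) (h : Xu ≃ₜ Yu)
    (hh : ∀ g g' : C(X, ℂ), (∀ x ∉ Xu, g x = 0) → (∀ y ∉ Yu, g' y = 0) →
      (∀ y : Yu, g' y = g (h.symm y)) → u * M g * star u = M g')
    {x : Xu} (hx : (star u * u) (lp.single 2 (x : X) 1) = lp.single 2 (x : X) 1) :
    ∀ z ≠ (h x : X), u (lp.single 2 (x : X) 1) z = 0 := by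
  intro z hz
  obtain ⟨g, g', hg, hg', hgg', hgx, hg'z⟩ :=
    h.exists_continuousMap_comp_symm_eq (R := ℂ) hXu hYu hz
  have hfix : u (lp.single 2 (x : X) 1) = M g' (u (lp.single 2 (x : X) 1)) :=
    calc u (lp.single 2 (x : X) 1) = u (M g ((star u * u) (lp.single 2 (x : X) 1))) := by
          rw [hx, hM, hgx, one_smul]
      _ = (u * M g * star u) (u (lp.single 2 (x : X) 1)) := rfl
      _ = M g' (u (lp.single 2 (x : X) 1)) := by rw [hh g g' hg hg' hgg']
  rw [hfix, apply_eq_mul_apply_of_apply_single (hM g'), hg'z, zero_mul]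

end Hilbert

theorem Function.iterate_eq_iterate_of_le {α : Type*} {f : α → α} {k m : ℕ} {x y : α}
    (h : f^[k] y = f^[k] x) (hkm : k ≤ m) : f^[m] y = f^[m] x := by
  obtain ⟨j, rfl⟩ := Nat.exists_eq_add_of_le hkm
  simp only [add_comm k j, Function.iterate_add_apply, h]

section MarkovShift

variable {N : ℕ} {A : Matrix (Fin N) (Fin N) ℕ} [DecidableEq (MarkovShift A)]

theorem basisVec_eq_single (x : MarkovShift A) : basisVec A x = lp.single 2 x 1 := by
  unfold basisVec
  congr
  exact Subsingleton.elim _ _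

theorem IsMultOp.apply_single {M : C(MarkovShift A, ℂ) → (MSHilbert A →L[ℂ] MSHilbert A)}
    (hM : IsMultOp A M) (f : C(MarkovShift A, ℂ)) (x : MarkovShift A) :
    M f (lp.single 2 x 1) = f x • lp.single 2 x 1 := by
  simpa only [basisVec_eq_single] using hM f x

theorem IsShiftOp.matrixSupportedIn {i : Fin N} {T : MSHilbert A →L[ℂ] MSHilbert A}
    (hT : IsShiftOp A i T) : MatrixSupportedIn (fun y x => mshift A y = x) T := by
  intro x y hxy
  simp only [← basisVec_eq_single] at hxy
  by_cases hix : A i (x.1 0) = 1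
  · rw [(hT x).1 hix, basisVec_eq_single] at hxy
    obtain rfl : y = mcons A i x hix := by
      by_contra hne
      exact hxy (lp.single_apply_ne 2 _ _ hne)
    rfl
  · rw [(hT x).2 hix] at hxy
    exact absurd rfl hxy

theorem matrixSupportedIn_wordOp {T : Fin N → (MSHilbert A →L[ℂ] MSHilbert A)}
    (hT : IsGenFamily A T) (n : ℕ) (μ : ℕ → Fin N) :
    MatrixSupportedIn (fun y x => (mshift A)^[n] y = x) (wordOp A T n μ) := by
  induction n with
  | zero =>
    rw [wordOp, List.range_zero, List.map_nil, List.prod_nil, ← map_one (algebraMap ℂ _)]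
    exact (MatrixSupportedIn.algebraMap 1).mono fun y x hyx => hyx
  | succ n ih =>
    have hsucc : wordOp A T (n + 1) μ = wordOp A T n μ * T (μ n) := by
      simp [wordOp, List.range_succ]
    rw [hsucc]
    refine (ih.mul (hT (μ n)).matrixSupportedIn).mono ?_
    rintro y x ⟨z, rfl, rfl⟩
    exact Function.iterate_succ_apply' _ _ _

theorem exists_matrixSupportedIn_iterate_eq_of_mem_adjoin
    {T : Fin N → (MSHilbert A →L[ℂ] MSHilbert A)} (hT : IsGenFamily A T)
    {F : MSHilbert A →L[ℂ] MSHilbert A}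
    (hF : F ∈ StarAlgebra.adjoin ℂ
      { a | ∃ (n : ℕ) (μ ν : ℕ → Fin N), IsAdmissible A n μ ∧ IsAdmissible A n ν ∧
          a = wordOp A T n μ * star (wordOp A T n ν) }) :
    ∃ k, MatrixSupportedIn (fun y x => (mshift A)^[k] y = (mshift A)^[k] x) F := by
  induction hF using StarAlgebra.adjoin_induction with
  | mem a ha =>
    obtain ⟨n, μ, ν, -, -, rfl⟩ := ha
    refine ⟨n,
      ((matrixSupportedIn_wordOp hT n μ).mul (matrixSupportedIn_wordOp hT n ν).star).mono ?_⟩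
    rintro y x ⟨z, rfl, hxz⟩
    exact hxz.symm
  | algebraMap c => exact ⟨0, (MatrixSupportedIn.algebraMap c).mono fun y x hyx => congrArg _ hyx⟩
  | add a b _ _ iha ihb =>
    obtain ⟨k, hk⟩ := iha
    obtain ⟨m, hm⟩ := ihb
    exact ⟨max k m,
      (hk.mono fun y x hyx => Function.iterate_eq_iterate_of_le hyx (le_max_left k m)).add
        (hm.mono fun y x hyx => Function.iterate_eq_iterate_of_le hyx (le_max_right k m))⟩
  | mul a b _ _ iha ihb =>
    obtain ⟨k, hk⟩ := iha
    obtain ⟨m, hm⟩ := ihb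
    refine ⟨max k m, (hk.mul hm).mono ?_⟩
    rintro y x ⟨z, hyz, hzx⟩
    exact (Function.iterate_eq_iterate_of_le hyz (le_max_left k m)).trans
      (Function.iterate_eq_iterate_of_le hzx (le_max_right k m))
  | star a _ iha =>
    obtain ⟨k, hk⟩ := iha
    exact ⟨k, hk.star.mono fun y x hyx => hyx.symm⟩

end MarkovShift

theorem exists_iterate_eq_of_mem_AFalg_general
    {N : ℕ} (A : Matrix (Fin N) (Fin N) ℕ)
    (T : Fin N → (MSHilbert A →L[ℂ] MSHilbert A)) (hT : IsGenFamily A T)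
    (M : C(MarkovShift A, ℂ) → (MSHilbert A →L[ℂ] MSHilbert A)) (hM : IsMultOp A M)
    (u : MSHilbert A →L[ℂ] MSHilbert A)
    (humem : u ∈ AFalg A T)
    (Xu Yu : Set (MarkovShift A)) (hXu : IsClopen Xu) (hYu : IsClopen Yu)
    (χX : C(MarkovShift A, ℂ))
    (hχX : ∀ x, χX x = Set.indicator Xu (fun _ => (1 : ℂ)) x)
    (hpu : star u * u = M χX)
    (h : Xu ≃ₜ Yu)
    (hh : ∀ g g' : C(MarkovShift A, ℂ),
      (∀ x ∉ Xu, g x = 0) → (∀ y ∉ Yu, g' y = 0) →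
      (∀ y : Yu, g' y = g (h.symm y)) →
      u * M g * star u = M g') :
    ∃ k : ℕ, ∀ (x : MarkovShift A) (hx : x ∈ Xu),
      (mshift A)^[k] (h ⟨x, hx⟩ : MarkovShift A) = (mshift A)^[k] x := by
  classical
  obtain ⟨F, hF, hdist⟩ := Metric.mem_closure_iff.mp humem 1 one_pos
  obtain ⟨k, hk⟩ := exists_matrixSupportedIn_iterate_eq_of_mem_adjoin hT hF
  refine ⟨k, fun x hx => by_contra fun hne => ?_⟩
  set e : MSHilbert A := lp.single 2 x 1
  have hfix : (star u * u) e = e := by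
    rw [hpu, hM.apply_single, hχX, Set.indicator_of_mem hx, one_smul]
  have hconc := apply_single_apply_eq_zero_of_ne hM.apply_single hXu hYu h hh (x := ⟨x, hx⟩) hfix
  have hF0 : F e (h ⟨x, hx⟩) = 0 := not_not.mp (mt (hk x _) hne)
  have : 1 ≤ dist u F :=
    calc (1 : ℝ) = ‖u e‖ := by
          rw [u.norm_apply_eq_of_star_mul_self_apply hfix, lp.norm_single (by norm_num), norm_one]
      _ = ‖u e (h ⟨x, hx⟩)‖ := lp.norm_eq_norm_apply_of_forall_ne (by norm_num) hconc
      _ = ‖(u - F) e (h ⟨x, hx⟩)‖ := by simp [hF0]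
      _ ≤ dist u F := dist_eq_norm u F ▸ norm_apply_single_apply_le_opNorm _ _ _
  linarith

/-- `A` satisfies condition (I); `u ∈ F_A` is a partial isometry with
`u D_A u^* ⊆ D_A` and `u^* D_A u ⊆ D_A`, `u^*u = M_{χ_{X_u}}`, `uu^* = M_{χ_{Y_u}}` for
clopen `X_u, Y_u`, and `h : X_u → Y_u` is a homeomorphism with `u M_g u^* = M_{g∘h⁻¹}`
for every `g` vanishing off `X_u`.  Then there is `k ∈ ℕ` with
`σ_A^k(h(x)) = σ_A^k(x)` for every `x ∈ X_u`. -/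
theorem exists_iterate_eq_of_mem_AFalg
    {N : ℕ} (hN : 2 ≤ N) (A : Matrix (Fin N) (Fin N) ℕ)
    (hA : ∀ i j, A i j = 0 ∨ A i j = 1) (hI : ConditionI A)
    (T : Fin N → (MSHilbert A →L[ℂ] MSHilbert A)) (hT : IsGenFamily A T)
    (M : C(MarkovShift A, ℂ) → (MSHilbert A →L[ℂ] MSHilbert A)) (hM : IsMultOp A M)
    (u : MSHilbert A →L[ℂ] MSHilbert A)
    (humem : u ∈ AFalg A T) (hupi : u * star u * u = u)
    (hconj : ∀ f : C(MarkovShift A, ℂ), ∃ g, u * M f * star u = M g)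
    (hconj' : ∀ f : C(MarkovShift A, ℂ), ∃ g, star u * M f * u = M g)
    (Xu Yu : Set (MarkovShift A)) (hXu : IsClopen Xu) (hYu : IsClopen Yu)
    (χX χY : C(MarkovShift A, ℂ))
    (hχX : ∀ x, χX x = Set.indicator Xu (fun _ => (1 : ℂ)) x)
    (hχY : ∀ x, χY x = Set.indicator Yu (fun _ => (1 : ℂ)) x)
    (hpu : star u * u = M χX) (hqu : u * star u = M χY)
    (h : Xu ≃ₜ Yu)
    (hh : ∀ g g' : C(MarkovShift A, ℂ),
      (∀ x ∉ Xu, g x = 0) → (∀ y ∉ Yu, g' y = 0) →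
      (∀ y : Yu, g' y = g (h.symm y)) →
      u * M g * star u = M g') :
    ∃ k : ℕ, ∀ (x : MarkovShift A) (hx : x ∈ Xu),
      (mshift A)^[k] (h ⟨x, hx⟩ : MarkovShift A) = (mshift A)^[k] x :=
  exists_iterate_eq_of_mem_AFalg_general A T hT M hM u humem Xu Yu hXu hYu χX hχX hpu h hh
end
end

section
/- If (X_A, σ_A) and (X_B, σ_B) are topologically orbit equivalent, then there exists a homeomorphism h : X_A → X_B such that h ∘ [σ_A]_c ∘ h^{-1} = [σ_B]_c; indeed any homeomorphism implementing the topological orbit equivalence conjugates [σ_A]_c onto [σ_B]_c. -/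
open Matrix

/-! Membership in `[σ]_c` says that `τ` and `id` agree up to continuously varying numbers of
iterates of the shift, a relation that is an equivalence and survives precomposition by
continuous maps. The cocycle `(k₁, l₁)` says that `h ∘ σ_A` and `h` are so related; iterating
it, so are `h ∘ σ_A^[n]` and `h` for every continuous `n : X_A → ℕ` (glue the exponents over
the clopen level sets of `n`). Hence `h` carries the relation from `X_A` to `X_B`, and
`h ∘ τ ∘ h⁻¹` is related to `id`. The cocycle `(k₂, l₂)` gives the reverse inclusion. -/

theorem continuous_apply_index {ι X Y : Type*} [TopologicalSpace ι] [DiscreteTopology ι]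
    [TopologicalSpace X] [TopologicalSpace Y] {F : ι → X → Y} (hF : ∀ i, Continuous (F i))
    {n : X → ι} (hn : Continuous n) : Continuous fun x => F (n x) x := by
  refine continuous_iff_continuousAt.2 fun x => ((hF (n x)).continuousAt).congr ?_
  have hnx : ∀ᶠ y in nhds x, n y = n x :=
    hn.continuousAt.eventually (p := (· = n x)) (by simp [nhds_discrete])
  filter_upwards [hnx] with y hy
  rw [hy]

def EqUpToContinuousIterates {X Z : Type*} [TopologicalSpace Z] (f : X → X) (u v : Z → X) :
    Prop :=
  ∃ k l : Z → ℕ, Continuous k ∧ Continuous l ∧ ∀ z, f^[k z] (u z) = f^[l z] (v z)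

namespace EqUpToContinuousIterates

variable {X Y Z : Type*} [TopologicalSpace Z] {f : X → X} {u v w : Z → X}

theorem refl (f : X → X) (u : Z → X) : EqUpToContinuousIterates f u u :=
  ⟨0, 0, continuous_const, continuous_const, fun _ => rfl⟩

theorem symm (huv : EqUpToContinuousIterates f u v) : EqUpToContinuousIterates f v u :=
  let ⟨k, l, hk, hl, hkl⟩ := huv
  ⟨l, k, hl, hk, fun z => (hkl z).symm⟩

theorem trans (huv : EqUpToContinuousIterates f u v) (hvw : EqUpToContinuousIterates f v w) :
    EqUpToContinuousIterates f u w := by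
  obtain ⟨k, l, hk, hl, hkl⟩ := huv
  obtain ⟨k', l', hk', hl', hkl'⟩ := hvw
  refine ⟨k' + k, l + l', hk'.add hk, hl.add hl', fun z => ?_⟩
  calc f^[k' z + k z] (u z) = f^[k' z] (f^[l z] (v z)) := by
        rw [Function.iterate_add_apply, hkl]
    _ = f^[l z] (f^[k' z] (v z)) := by
        rw [← Function.iterate_add_apply, ← Function.iterate_add_apply, Nat.add_comm]
    _ = f^[l z + l' z] (w z) := by rw [hkl', Function.iterate_add_apply]

theorem comp_right {W : Type*} [TopologicalSpace W] {c : W → Z} (hc : Continuous c)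
    (huv : EqUpToContinuousIterates f u v) : EqUpToContinuousIterates f (u ∘ c) (v ∘ c) :=
  let ⟨k, l, hk, hl, hkl⟩ := huv
  ⟨k ∘ c, l ∘ c, hk.comp hc, hl.comp hc, fun y => hkl (c y)⟩

theorem apply_index {F : ℕ → Z → X} (hF : ∀ m, EqUpToContinuousIterates f (F m) v)
    {n : Z → ℕ} (hn : Continuous n) : EqUpToContinuousIterates f (fun z => F (n z) z) v := by
  choose k l hk hl hkl using hF
  exact ⟨fun z => k (n z) z, fun z => l (n z) z, continuous_apply_index hk hn,
    continuous_apply_index hl hn, fun z => hkl (n z) z⟩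

section Transport

variable [TopologicalSpace X] {g : Y → Y} {φ : X → Y}

theorem map_iterate (hf : Continuous f)
    (hφ : EqUpToContinuousIterates g (φ ∘ f) φ) (hu : Continuous u) (m : ℕ) :
    EqUpToContinuousIterates g (fun z => φ (f^[m] (u z))) (fun z => φ (u z)) := by
  induction m with
  | zero => exact refl g _
  | succ m ih =>
    have hstep := hφ.comp_right ((hf.iterate m).comp hu)
    simp only [Function.comp_def, ← Function.iterate_succ_apply' f] at hstep
    exact hstep.trans ih

theorem map (hf : Continuous f)
    (hφ : EqUpToContinuousIterates g (φ ∘ f) φ) (hu : Continuous u)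
    (hv : Continuous v) (huv : EqUpToContinuousIterates f u v) :
    EqUpToContinuousIterates g (φ ∘ u) (φ ∘ v) := by
  obtain ⟨k, l, hk, hl, hkl⟩ := huv
  have hu' := apply_index (map_iterate hf hφ hu) hk
  have hv' := apply_index (map_iterate hf hφ hv) hl
  simp only [hkl] at hu'
  exact hu'.symm.trans hv'

end Transport

end EqUpToContinuousIterates

theorem mshift_continuous {N : ℕ} (A : Matrix (Fin N) (Fin N) ℕ) :
    Continuous (mshift A) := by
  apply Continuous.subtype_mk
  exact continuous_pi fun n => (continuous_apply (n + 1)).comp continuous_subtype_val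

theorem mem_topFullGroup_iff {N : ℕ} {A : Matrix (Fin N) (Fin N) ℕ}
    {τ : MarkovShift A ≃ₜ MarkovShift A} :
    τ ∈ topFullGroup A ↔ EqUpToContinuousIterates (mshift A) τ id := by
  refine ⟨fun hτ => hτ.2, fun hτ => ⟨fun x => ?_, hτ⟩⟩
  obtain ⟨k, l, -, -, hkl⟩ := hτ
  exact ⟨k x, l x, hkl x⟩

theorem conj_mem_topFullGroup {N N' : ℕ} {A : Matrix (Fin N) (Fin N) ℕ}
    {B : Matrix (Fin N') (Fin N') ℕ} (h : MarkovShift A ≃ₜ MarkovShift B)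
    (hcoc : EqUpToContinuousIterates (mshift B) (h ∘ mshift A) h)
    {τ : MarkovShift A ≃ₜ MarkovShift A} (hτ : τ ∈ topFullGroup A) :
    (h.symm.trans τ).trans h ∈ topFullGroup B := by
  have hτ' := (mem_topFullGroup_iff.1 hτ).comp_right h.symm.continuous
  have := EqUpToContinuousIterates.map (mshift_continuous A) hcoc
    (τ.continuous.comp h.symm.continuous) h.symm.continuous hτ'
  rw [mem_topFullGroup_iff]
  convert this using 1 <;> ext y <;> simp

theorem conj_topFullGroup_of_topOrbitEquiv_general
    {N N' : ℕ} (A : Matrix (Fin N) (Fin N) ℕ) (B : Matrix (Fin N') (Fin N') ℕ)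
    (h : MarkovShift A ≃ₜ MarkovShift B)
    (k₁ l₁ : MarkovShift A → ℕ) (hk₁ : Continuous k₁) (hl₁ : Continuous l₁)
    (hcoc₁ : ∀ x, (mshift B)^[k₁ x] (h (mshift A x)) = (mshift B)^[l₁ x] (h x))
    (k₂ l₂ : MarkovShift B → ℕ) (hk₂ : Continuous k₂) (hl₂ : Continuous l₂)
    (hcoc₂ : ∀ y, (mshift A)^[k₂ y] (h.symm (mshift B y)) = (mshift A)^[l₂ y] (h.symm y)) :
    (fun τ : MarkovShift A ≃ₜ MarkovShift A => (h.symm.trans τ).trans h) ''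
      topFullGroup A = topFullGroup B := by
  refine Set.Subset.antisymm ?_ fun ρ hρ => ⟨(h.trans ρ).trans h.symm, ?_, ?_⟩
  · rintro _ ⟨τ, hτ, rfl⟩
    exact conj_mem_topFullGroup h ⟨k₁, l₁, hk₁, hl₁, hcoc₁⟩ hτ
  · simpa using conj_mem_topFullGroup h.symm ⟨k₂, l₂, hk₂, hl₂, hcoc₂⟩ hρ
  · ext y
    simp

/-- if `h : X_A → X_B` implements a topological orbit equivalence between
`(X_A, σ_A)` and `(X_B, σ_B)`, then `h` conjugates `[σ_A]_c` onto `[σ_B]_c` (so in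
particular such a conjugating homeomorphism exists). -/
theorem conj_topFullGroup_of_topOrbitEquiv
    {N N' : ℕ} (A : Matrix (Fin N) (Fin N) ℕ) (B : Matrix (Fin N') (Fin N') ℕ)
    (hA : ∀ i j, A i j = 0 ∨ A i j = 1) (hB : ∀ i j, B i j = 0 ∨ B i j = 1)
    (h : MarkovShift A ≃ₜ MarkovShift B)
    (horb : ∀ x, h '' orb A x = orb B (h x))
    (k₁ l₁ : MarkovShift A → ℕ) (hk₁ : Continuous k₁) (hl₁ : Continuous l₁)
    (hcoc₁ : ∀ x, (mshift B)^[k₁ x] (h (mshift A x)) = (mshift B)^[l₁ x] (h x))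
    (k₂ l₂ : MarkovShift B → ℕ) (hk₂ : Continuous k₂) (hl₂ : Continuous l₂)
    (hcoc₂ : ∀ y, (mshift A)^[k₂ y] (h.symm (mshift B y)) = (mshift A)^[l₂ y] (h.symm y)) :
    (fun τ : MarkovShift A ≃ₜ MarkovShift A => (h.symm.trans τ).trans h) ''
      topFullGroup A = topFullGroup B :=
  conj_topFullGroup_of_topOrbitEquiv_general A B h k₁ l₁ hk₁ hl₁ hcoc₁ k₂ l₂ hk₂ hl₂ hcoc₂
end
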